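/- Let G be a topological group, H a closed normal subgroup, and k ≥ 1. If P_k(H) is dense in H and H/H⁰ is finite, then P_k(H/H⁰) = H/H⁰ and P_k(H⁰) is dense in H⁰. -/

import Mathlib

open Pointwise


theorem stmt_9 {H : Type*} [Group H] [TopologicalSpace H] [IsTopologicalGroup H]
    (k : ℕ) (hk : 1 ≤ k)
    (H0 : Subgroup H) (hH0 : (H0 : Set H) = connectedComponent (1 : H)) [H0.Normal]
    (hfin : Finite (H ⧸ H0))
    (hdense : Dense (Set.range fun x : H => x ^ k)) :
    Function.Surjective (fun x : H ⧸ H0 => x ^ k) ∧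
    Dense (Set.range fun x : H0 => x ^ k) := by
  have hclosed : IsClosed (H0 : Set H) := hH0 ▸ isClosed_connectedComponent
  haveI : H0.FiniteIndex := Subgroup.finiteIndex_of_finite_quotient (H := H0)
  have hopen : IsOpen (H0 : Set H) := H0.isOpen_of_isClosed_of_finiteIndex hclosed
  have hsurj : Function.Surjective (fun x : H ⧸ H0 => x ^ k) := by
    intro q
    obtain ⟨g, rfl⟩ := QuotientGroup.mk_surjective q
    have hOpen : IsOpen (g • (H0 : Set H)) := hopen.smul g
    have hne : (g • (H0 : Set H)).Nonempty :=
      ⟨g, ⟨1, H0.one_mem, by simp⟩⟩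
    obtain ⟨z, hzmem, hzU⟩ := hdense.exists_mem_open hOpen hne
    obtain ⟨x, rfl⟩ := hzmem
    obtain ⟨h, hh, hxk⟩ := hzU
    refine ⟨QuotientGroup.mk x, ?_⟩
    simp only
    have hxk' : g * h = x ^ k := hxk
    rw [← QuotientGroup.mk_pow, ← hxk']
    exact QuotientGroup.mk_mul_of_mem g hh
  have hinj : Function.Injective (fun x : H ⧸ H0 => x ^ k) :=
    (Finite.injective_iff_surjective).mpr hsurj
  have key : ∀ x : H, x ^ k ∈ H0 → x ∈ H0 := by
    intro x hx
    have h1 : (fun x : H ⧸ H0 => x ^ k) (QuotientGroup.mk x)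
        = (fun x : H ⧸ H0 => x ^ k) 1 := by
      simp only [one_pow, ← QuotientGroup.mk_pow]
      exact (QuotientGroup.eq_one_iff _).mpr hx
    exact (QuotientGroup.eq_one_iff x).mp (hinj h1)
  refine ⟨hsurj, ?_⟩
  rw [Subtype.dense_iff]
  intro y hy
  rw [mem_closure_iff]
  intro V hV hyV
  have hVo : IsOpen (V ∩ (H0 : Set H)) := hV.inter hopen
  obtain ⟨z, hzmem, hzV, hzH0⟩ := hdense.exists_mem_open hVo ⟨y, hyV, hy⟩
  obtain ⟨x, rfl⟩ := hzmem
  refine ⟨x ^ k, hzV, (⟨x, key x hzH0⟩ : H0) ^ k, ⟨⟨x, key x hzH0⟩, rfl⟩, ?_⟩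
  simp
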